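/- Let L be an 𝒪_F-lattice chain in V. Then 𝔓(L) = {a ∈ A : a(L(i)) ⊆ L(i+1) for all i} is a two-sided ideal of the ring 𝔄(L) and equals the Jacobson radical of 𝔄(L). -/

import Mathlib

/-!
Context: `F` is a nonarchimedean local field, modelled as a field together with a
valuation subring `OF` which is a discrete valuation ring with finite residue field,
with a fixed uniformizer `ϖF` (an irreducible element of `OF`).  `V` is a nonzero
finite-dimensional `F`-vector space, `A = End_F V` and `G = GL_F(V) = (End_F V)ˣ`.
-/

noncomputable section

variable {F : Type*} [Field F] {V : Type*} [AddCommGroup V] [Module F V]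

/-- A subring of `F` acts on any `F`-vector space by restriction of scalars. -/
instance (priority := 100) ValuationSubring.instModuleOfModule (O : ValuationSubring F) :
    Module O V :=
  Module.compHom V O.subtype

/-- `L : ℤ → Submodule 𝒪 V` is an `𝒪`-lattice chain of period `e` : each `L i` is a
finitely generated `𝒪`-submodule spanning `V` over `F` (an `𝒪`-lattice), the chain is
strictly decreasing, and `ϖ • L i = L (i + e)` for all `i`. -/
structure IsLatticeChain (O : ValuationSubring F) (ϖ : O) (L : ℤ → Submodule O V) (e : ℕ) :
    Prop where
  period_pos : 0 < e
  fg : ∀ i, (L i).FG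
  spans : ∀ i, Submodule.span F ((L i : Set V)) = ⊤
  strict : ∀ i, L (i + 1) < L i
  smul_eq : ∀ (i : ℤ) (x : V), x ∈ L (i + e) ↔ ∃ y ∈ L i, x = (ϖ : F) • y

/-- The hereditary order `𝔄(L) = {a ∈ End_F V : a (L i) ⊆ L i for all i}`. -/
def hereditaryOrder (O : ValuationSubring F) (L : ℤ → Submodule O V) :
    Subring (Module.End F V) where
  carrier := {a | ∀ i, ∀ x ∈ L i, a x ∈ L i}
  zero_mem' := fun i x _ => by simpa using (L i).zero_mem
  one_mem' := fun i x hx => by simpa using hx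
  add_mem' := fun {a b} ha hb i x hx => by
    simpa using (L i).add_mem (ha i x hx) (hb i x hx)
  neg_mem' := fun {a} ha i x hx => by simpa using (L i).neg_mem (ha i x hx)
  mul_mem' := fun {a b} ha hb i x hx => by
    simpa [Module.End.mul_apply] using ha i _ (hb i x hx)

lemma mem_hereditaryOrder {O : ValuationSubring F} {L : ℤ → Submodule O V}
    {a : Module.End F V} :
    a ∈ hereditaryOrder O L ↔ ∀ i, ∀ x ∈ L i, a x ∈ L i := Iff.rfl

/-- The radical `𝔓(L) = {a ∈ End_F V : a (L i) ⊆ L (i+1) for all i}`, as a set. -/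
def radicalSet (O : ValuationSubring F) (L : ℤ → Submodule O V) :
    Set (Module.End F V) :=
  {a | ∀ i, ∀ x ∈ L i, a x ∈ L (i + 1)}

/-- The unit group `U(𝔄(L)) = 𝔄(L)ˣ` of the hereditary order, as a set of
endomorphisms: the elements of `𝔄(L)` invertible in `𝔄(L)`. -/
def orderUnits (O : ValuationSubring F) (L : ℤ → Submodule O V) :
    Set (Module.End F V) :=
  {a | a ∈ hereditaryOrder O L ∧ ∃ b ∈ hereditaryOrder O L, a * b = 1 ∧ b * a = 1}

/-- The unit group `U(𝔄(L)) = 𝔄(L)ˣ`, as a subgroup of `G = GL_F(V)`. -/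
def unitGroup (O : ValuationSubring F) (L : ℤ → Submodule O V) :
    Subgroup (Module.End F V)ˣ where
  carrier := {u | ↑u ∈ hereditaryOrder O L ∧ ↑u⁻¹ ∈ hereditaryOrder O L}
  one_mem' := ⟨one_mem _, by simpa using one_mem (hereditaryOrder O L)⟩
  mul_mem' := fun {a b} ha hb => ⟨mul_mem ha.1 hb.1, by
    rw [mul_inv_rev]; exact mul_mem hb.2 ha.2⟩
  inv_mem' := fun {a} ha => ⟨ha.2, by simpa using ha.1⟩

lemma mem_unitGroup {O : ValuationSubring F} {L : ℤ → Submodule O V}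
    {u : (Module.End F V)ˣ} :
    u ∈ unitGroup O L ↔
      (u : Module.End F V) ∈ hereditaryOrder O L ∧
        ((u⁻¹ : (Module.End F V)ˣ) : Module.End F V) ∈ hereditaryOrder O L := Iff.rfl

/-- Conjugation `g S g⁻¹` of a set of endomorphisms by an element `g ∈ GL_F(V)`. -/
def conjIm (g : (Module.End F V)ˣ) (S : Set (Module.End F V)) : Set (Module.End F V) :=
  (fun a => (g : Module.End F V) * a * ((g⁻¹ : (Module.End F V)ˣ) : Module.End F V)) '' S

lemma IsLatticeChain.antitone {O : ValuationSubring F} {ϖ : O} {L : ℤ → Submodule O V}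
    {e : ℕ} (hL : IsLatticeChain O ϖ L e) : Antitone L :=
  antitone_int_of_succ_le fun i => (hL.strict i).le

lemma IsLatticeChain.smul_mem_succ {O : ValuationSubring F} {ϖ : O} {L : ℤ → Submodule O V}
    {e : ℕ} (hL : IsLatticeChain O ϖ L e) (i : ℤ) {x : V} (hx : x ∈ L i) :
    (ϖ : F) • x ∈ L (i + 1) := by
  have h1 : (ϖ : F) • x ∈ L (i + e) := (hL.smul_eq i _).2 ⟨x, hx, rfl⟩
  have h2 : (i + 1 : ℤ) ≤ i + e := by have := hL.period_pos; omega
  exact hL.antitone h2 h1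

/-- The radical `𝔓(L)` as a (left) ideal of the hereditary order `𝔄(L)`. -/
def radicalIdeal (O : ValuationSubring F) (L : ℤ → Submodule O V) :
    Ideal (hereditaryOrder O L) where
  carrier := {a | ∀ i, ∀ x ∈ L i, (a : Module.End F V) x ∈ L (i + 1)}
  add_mem' := fun {a b} ha hb i x hx => by
    simpa using (L (i + 1)).add_mem (ha i x hx) (hb i x hx)
  zero_mem' := fun i x _ => by simpa using (L (i + 1)).zero_mem
  smul_mem' := fun c a ha i x hx => c.2 (i + 1) _ (ha i x hx)

lemma mem_radicalIdeal {O : ValuationSubring F} {L : ℤ → Submodule O V}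
    {a : hereditaryOrder O L} :
    a ∈ radicalIdeal O L ↔ ∀ i, ∀ x ∈ L i, (a : Module.End F V) x ∈ L (i + 1) := Iff.rfl


/-!
`𝔓 ⊆ J(𝔄)`: for `p ∈ 𝔓` we have `L i ⊆ (1 + p) L i + L (i + k)` for every `k`, so with
`L (i + e) = ϖ L i` Nakayama gives `(1 + p) L i = L i`; hence `1 + p` is invertible in `A`
(finite dimension) and its inverse lies in `𝔄`.

`J(𝔄) ⊆ 𝔓`: if `u ∈ L i \ L (i + 1)`, then because `ϖ` is a uniformizer `L i / L (i + 1)` is a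
vector space over the residue field, and a functional on it that is nonzero at `u`, lifted to
`L i` and extended to `V`, gives `f ∈ V^*` with `f u = 1`, `f (L i) ⊆ 𝒪` and
`f (L (i + 1)) ⊆ ϖ 𝒪`. Then `v ↦ f v • x` lies in `𝔄` for every `x ∈ L i` and sends `u` to `x`.
So if `a ∈ J(𝔄)` moved some `x ∈ L i` out of `L (i + 1)`, some `y ∈ 𝔄` would satisfy
`y (a x) = x`, while `1 - y a` is left invertible in `𝔄`; hence `x = 0`, which is absurd.
-/

namespace Ideal

theorem le_jacobson_bot_of_isUnit_one_add {R : Type*} [Ring R] {I : Ideal R}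
    (h : ∀ a ∈ I, IsUnit (1 + a)) : I ≤ jacobson ⊥ := by
  intro a ha
  refine mem_jacobson_iff.2 fun y => ?_
  obtain ⟨u, hu⟩ := h (y * a) (I.mul_mem_left y ha)
  refine ⟨↑u⁻¹, ?_⟩
  rw [Submodule.mem_bot, mul_assoc, ← mul_add_one, ← add_comm 1, ← hu, Units.inv_mul, sub_self]

theorem eq_zero_of_mem_jacobson_bot_of_mul_smul_eq {R M : Type*} [Ring R] [AddCommGroup M]
    [Module R M] {a : R} (ha : a ∈ jacobson (⊥ : Ideal R)) {y : R} {x : M}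
    (h : (y * a) • x = x) : x = 0 := by
  obtain ⟨z, hz⟩ := mem_jacobson_iff.1 ha (-y)
  have hz1 : z * (1 - y * a) = 1 := by
    rw [Submodule.mem_bot] at hz
    rw [← sub_eq_zero, ← hz]
    noncomm_ring
  rw [← one_smul R x, ← hz1, mul_smul, sub_smul, one_smul, h, sub_self, smul_zero]

end Ideal

theorem IsLocalRing.exists_linearMap_isUnit_apply_of_notMem {R M : Type*} [CommRing R]
    [IsLocalRing R] [AddCommGroup M] [Module R M] [Module.Projective R M] {N : Submodule R M}
    (hN : ∀ r ∈ maximalIdeal R, ∀ v : M, r • v ∈ N) {u : M} (hu : u ∉ N) :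
    ∃ g : M →ₗ[R] R, IsUnit (g u) ∧ ∀ v ∈ N, g v ∈ maximalIdeal R := by
  have htors : Module.IsTorsionBySet R (M ⧸ N) (maximalIdeal R) := fun v r => by
    induction v using Submodule.Quotient.induction_on with
    | _ v => exact (Submodule.Quotient.mk_eq_zero N).2 (hN r r.2 v)
  let _ : Module (ResidueField R) (M ⧸ N) := htors.module
  have _ : IsScalarTower R (ResidueField R) (M ⧸ N) := htors.isScalarTower
  obtain ⟨φ, hφ⟩ := Module.Projective.exists_dual_ne_zero (ResidueField R)
    (x := N.mkQ u) (by simpa using hu)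
  obtain ⟨g, hg⟩ := Module.projective_lifting_property (Algebra.linearMap R (ResidueField R))
    ((φ.restrictScalars R) ∘ₗ N.mkQ) residue_surjective
  have hgφ : ∀ v, residue R (g v) = φ (N.mkQ v) := fun v => LinearMap.congr_fun hg v
  refine ⟨g, (residue_ne_zero_iff_isUnit _).1 (by rwa [hgφ]), fun v hv => ?_⟩
  rw [← residue_eq_zero_iff, hgφ, N.mkQ_apply, (Submodule.Quotient.mk_eq_zero N).2 hv, map_zero]

theorem Submodule.IsLattice.exists_extend {R K V : Type*} [CommRing R] [IsDomain R]
    [IsPrincipalIdealRing R] [Field K] [Algebra R K] [IsFractionRing R K] [AddCommGroup V]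
    [Module R V] [Module K V] [IsScalarTower R K V] (M : Submodule R V) [M.IsLattice K]
    (g : M →ₗ[R] R) : ∃ f : V →ₗ[K] K, ∀ m : M, f m = algebraMap R K (g m) := by
  let b := Module.Free.chooseBasis R M
  let f : V →ₗ[K] K := (b.extendOfIsLattice K).constr K fun k => algebraMap R K (g (b k))
  have hf : f.restrictScalars R ∘ₗ M.subtype = Algebra.linearMap R K ∘ₗ g :=
    b.ext fun k => by simpa using (b.extendOfIsLattice K).constr_basis K _ k
  exact ⟨f, LinearMap.congr_fun hf⟩

instance ValuationSubring.instIsScalarTowerOfModule (O : ValuationSubring F) :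
    IsScalarTower O F V :=
  ⟨fun c x v => mul_smul (c : F) x v⟩

theorem isUnit_hereditaryOrder_of_forall_le_map [FiniteDimensional F V] {O : ValuationSubring F}
    {L : ℤ → Submodule O V} {i₀ : ℤ} (hspan : Submodule.span F (L i₀ : Set V) = ⊤)
    {a : hereditaryOrder O L}
    (ha : ∀ i, L i ≤ (L i).map ((a : Module.End F V).restrictScalars O)) : IsUnit a := by
  have hsurj : Function.Surjective (a : Module.End F V) := by
    rw [← LinearMap.range_eq_top, eq_top_iff, ← hspan, Submodule.span_le]
    intro x hx
    obtain ⟨y, -, hy⟩ := ha i₀ hx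
    exact ⟨y, hy⟩
  let u := LinearEquiv.ofBijective (a : Module.End F V)
    ⟨LinearMap.injective_iff_surjective.2 hsurj, hsurj⟩
  have hinv : (u.symm : Module.End F V) ∈ hereditaryOrder O L := by
    intro i x hx
    obtain ⟨y, hy, rfl⟩ := ha i hx
    change u.symm (u y) ∈ L i
    rwa [u.symm_apply_apply]
  exact ⟨⟨a, ⟨_, hinv⟩, Subtype.ext (LinearMap.ext u.apply_symm_apply),
    Subtype.ext (LinearMap.ext u.symm_apply_apply)⟩, rfl⟩

namespace IsLatticeChain

variable {O : ValuationSubring F} {ϖ : O} {L : ℤ → Submodule O V} {e : ℕ}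

theorem isLattice (hL : IsLatticeChain O ϖ L e) (i : ℤ) : (L i).IsLattice F :=
  ⟨hL.fg i, hL.spans i⟩

theorem not_isUnit (hL : IsLatticeChain O ϖ L e) : ¬IsUnit ϖ := by
  rintro ⟨u, rfl⟩
  have hsub : L 0 ≤ L (0 + e) := fun x hx => (hL.smul_eq 0 x).2
    ⟨(↑u⁻¹ : O) • x, (L 0).smul_mem _ hx, by
      change x = (u : O) • (↑u⁻¹ : O) • x
      rw [smul_smul, u.mul_inv, one_smul]⟩
  exact (hL.strict 0).not_ge (hsub.trans (hL.antitone (by have := hL.period_pos; omega)))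

theorem mem_add_iff (hL : IsLatticeChain O ϖ L e) (hϖ : (ϖ : F) ≠ 0) {i : ℤ} {x : V} :
    x ∈ L (i + e) ↔ (ϖ : F)⁻¹ • x ∈ L i := by
  rw [hL.smul_eq]
  constructor
  · rintro ⟨y, hy, rfl⟩
    rwa [inv_smul_smul₀ hϖ]
  · exact fun h => ⟨_, h, (smul_inv_smul₀ hϖ x).symm⟩

theorem mem_add_mul_iff (hL : IsLatticeChain O ϖ L e) (hϖ : (ϖ : F) ≠ 0) {i : ℤ} (q : ℤ)
    {x : V} : x ∈ L (i + q * e) ↔ (ϖ : F) ^ (-q) • x ∈ L i := by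
  induction q using Int.induction_on generalizing x with
  | zero => simp
  | succ n ih =>
    rw [show i + (n + 1) * e = i + n * e + e by ring, hL.mem_add_iff hϖ, ih, smul_smul,
      ← zpow_neg_one, ← zpow_add₀ hϖ, neg_add]
  | pred n ih =>
    have h := hL.mem_add_iff hϖ (i := i + (-n - 1) * e) (x := (ϖ : F) • x)
    rw [inv_smul_smul₀ hϖ, show i + (-n - 1) * e + e = i + -n * e by ring, ih, smul_smul,
      ← zpow_add_one₀ hϖ] at h
    rw [← h, show -(-(n : ℤ) - 1) = - -n + 1 by ring]

theorem mem_hereditaryOrder_of_forall_Ico (hL : IsLatticeChain O ϖ L e) (hϖ : (ϖ : F) ≠ 0)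
    {a : Module.End F V} (i : ℤ) (ha : ∀ t ∈ Set.Ico i (i + e), ∀ x ∈ L t, a x ∈ L t) :
    a ∈ hereditaryOrder O L := by
  intro j x hx
  have he : (0 : ℤ) < e := by exact_mod_cast hL.period_pos
  obtain ⟨t, q, ht, rfl⟩ : ∃ t q, t ∈ Set.Ico i (i + e) ∧ j = t + q * e :=
    ⟨i + (j - i) % e, (j - i) / e, ⟨by have := Int.emod_nonneg (j - i) he.ne'; omega,
      by have := Int.emod_lt_of_pos (j - i) he; omega⟩,
      by linarith [Int.emod_add_ediv_mul (j - i) e]⟩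
  rw [hL.mem_add_mul_iff hϖ] at hx ⊢
  rw [← map_smul]
  exact ha t ht _ hx

theorem le_map_one_add_sup (hL : IsLatticeChain O ϖ L e) {p : Module.End F V}
    (hp : p ∈ radicalSet O L) (i : ℤ) (k : ℕ) :
    L i ≤ (L i).map ((1 + p).restrictScalars O) ⊔ L (i + k) := by
  induction k with
  | zero => simp
  | succ k ih =>
    intro x hx
    obtain ⟨m, hm, y, hy, rfl⟩ := Submodule.mem_sup.1 (ih hx)
    have hpy : p y ∈ L (i + (k + 1 : ℕ)) := by
      rw [Nat.cast_succ, ← add_assoc]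
      exact hp _ _ hy
    refine Submodule.mem_sup.2 ⟨m + (1 + p) y, add_mem hm (Submodule.mem_map_of_mem
      (hL.antitone (by omega) hy)), -p y, neg_mem hpy, ?_⟩
    simp only [LinearMap.add_apply, Module.End.one_apply]
    abel

theorem le_map_one_add (hL : IsLatticeChain O ϖ L e) {p : Module.End F V}
    (hp : p ∈ radicalSet O L) (i : ℤ) : L i ≤ (L i).map ((1 + p).restrictScalars O) := by
  refine Submodule.le_of_le_smul_of_le_jacobson_bot (I := Ideal.span {ϖ}) (hL.fg i) ?_ ?_
  · rw [IsLocalRing.jacobson_eq_maximalIdeal ⊥ bot_ne_top, Ideal.span_le,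
      Set.singleton_subset_iff]
    exact (IsLocalRing.mem_maximalIdeal _).2 hL.not_isUnit
  · refine (hL.le_map_one_add_sup hp i e).trans (sup_le_sup_left (fun x hx => ?_) _)
    obtain ⟨y, hy, rfl⟩ := (hL.smul_eq i x).1 hx
    exact Submodule.smul_mem_smul (Ideal.mem_span_singleton_self ϖ) hy

theorem isUnit_one_add [FiniteDimensional F V] (hL : IsLatticeChain O ϖ L e)
    {p : hereditaryOrder O L} (hp : p ∈ radicalIdeal O L) : IsUnit (1 + p) :=
  isUnit_hereditaryOrder_of_forall_le_map (hL.spans 0) (hL.le_map_one_add hp)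

theorem radicalIdeal_le_jacobson [FiniteDimensional F V] (hL : IsLatticeChain O ϖ L e) :
    radicalIdeal O L ≤ (⊥ : Ideal (hereditaryOrder O L)).jacobson :=
  Ideal.le_jacobson_bot_of_isUnit_one_add fun _ hp => hL.isUnit_one_add hp

theorem exists_linearMap_apply_eq_one [IsDiscreteValuationRing O] (hL : IsLatticeChain O ϖ L e)
    (hϖ : Irreducible ϖ) {i : ℤ} {u : V} (hu : u ∈ L i) (hu' : u ∉ L (i + 1)) :
    ∃ f : V →ₗ[F] F, f u = 1 ∧ (∀ v ∈ L i, f v ∈ O) ∧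
      ∀ v ∈ L (i + 1), ∃ c : O, f v = ϖ * c := by
  have := hL.isLattice i
  have hmax := (IsDiscreteValuationRing.irreducible_iff_uniformizer ϖ).1 hϖ
  obtain ⟨g, hgu, hgN⟩ := IsLocalRing.exists_linearMap_isUnit_apply_of_notMem
    (N := (L (i + 1)).comap (L i).subtype) (u := ⟨u, hu⟩) (fun r hr v => by
      obtain ⟨c, rfl⟩ := Ideal.mem_span_singleton'.1 (hmax ▸ hr)
      rw [Submodule.mem_comap, Submodule.subtype_apply, Submodule.coe_smul, mul_smul]
      exact (L (i + 1)).smul_mem c (hL.smul_mem_succ i v.2)) hu'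
  obtain ⟨f, hf⟩ := Submodule.IsLattice.exists_extend (K := F) (L i) ((↑hgu.unit⁻¹ : O) • g)
  refine ⟨f, ?_, fun v hv => ?_, fun v hv => ?_⟩
  · rw [hf ⟨u, hu⟩, LinearMap.smul_apply, smul_eq_mul, hgu.val_inv_mul, map_one]
  · rw [hf ⟨v, hv⟩]
    exact ((↑hgu.unit⁻¹ • g) ⟨v, hv⟩).2
  · have hvi : v ∈ L i := hL.antitone (Int.le_add_one le_rfl) hv
    obtain ⟨c, hc⟩ := Ideal.mem_span_singleton'.1 (hmax ▸ hgN ⟨v, hvi⟩ hv)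
    refine ⟨↑hgu.unit⁻¹ * c, ?_⟩
    rw [hf ⟨v, hvi⟩, LinearMap.smul_apply, smul_eq_mul, ← hc,
      ValuationSubring.algebraMap_apply]
    push_cast
    ring

theorem exists_mem_hereditaryOrder_apply_eq [IsDiscreteValuationRing O]
    (hL : IsLatticeChain O ϖ L e) (hϖ : Irreducible ϖ) {i : ℤ} {u x : V} (hu : u ∈ L i)
    (hu' : u ∉ L (i + 1)) (hx : x ∈ L i) : ∃ y ∈ hereditaryOrder O L, y u = x := by
  obtain ⟨f, hfu, hfO, hfϖ⟩ := hL.exists_linearMap_apply_eq_one hϖ hu hu'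
  refine ⟨f.smulRight x, hL.mem_hereditaryOrder_of_forall_Ico (by simpa using hϖ.ne_zero) i
    fun t ht v hv => ?_, by rw [LinearMap.smulRight_apply, hfu, one_smul]⟩
  rcases ht.1.eq_or_lt with rfl | hit
  · exact (L i).smul_mem ⟨f v, hfO v hv⟩ hx
  · obtain ⟨c, hc⟩ := hfϖ v (hL.antitone (by omega) hv)
    rw [LinearMap.smulRight_apply, hc, mul_smul]
    exact hL.antitone ht.2.le ((hL.smul_eq i _).2 ⟨_, (L i).smul_mem c hx, rfl⟩)

theorem jacobson_le_radicalIdeal [IsDiscreteValuationRing O] (hL : IsLatticeChain O ϖ L e)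
    (hϖ : Irreducible ϖ) : (⊥ : Ideal (hereditaryOrder O L)).jacobson ≤ radicalIdeal O L := by
  intro a ha i x hx
  by_contra hax
  obtain ⟨y, hy, hyx⟩ := hL.exists_mem_hereditaryOrder_apply_eq hϖ (a.2 i x hx) hax hx
  have hx0 : x = 0 := Ideal.eq_zero_of_mem_jacobson_bot_of_mul_smul_eq ha (y := ⟨y, hy⟩) hyx
  exact hax (by rw [hx0, map_zero]; exact zero_mem _)

end IsLatticeChain

variable [FiniteDimensional F V] [Nontrivial V]
variable (OF : ValuationSubring F) [IsDiscreteValuationRing OF]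
  [Finite (IsLocalRing.ResidueField OF)] (ϖF : OF)

/-- `𝔓(L)` is a two-sided ideal of the ring `𝔄(L)` and equals the
Jacobson radical of `𝔄(L)` (the Jacobson radical of the zero ideal, i.e. the
intersection of the maximal (left) ideals). -/
theorem radicalIdeal_eq_jacobson
    (hϖF : Irreducible ϖF)
    (L : ℤ → Submodule OF V) (e : ℕ) (hL : IsLatticeChain OF ϖF L e) :
    (radicalSet OF L ⊆ (hereditaryOrder OF L : Set (Module.End F V))) ∧
    (∀ a : hereditaryOrder OF L,
      a ∈ radicalIdeal OF L ↔ (a : Module.End F V) ∈ radicalSet OF L) ∧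
    (∀ a ∈ radicalIdeal OF L, ∀ r : hereditaryOrder OF L,
      r * a ∈ radicalIdeal OF L ∧ a * r ∈ radicalIdeal OF L) ∧
    radicalIdeal OF L = (⊥ : Ideal (hereditaryOrder OF L)).jacobson :=
  ⟨fun _ ha i x hx => hL.antitone (Int.le_add_one le_rfl) (ha i x hx), fun _ => Iff.rfl,
    fun _ ha r => ⟨(radicalIdeal OF L).mul_mem_left r ha, fun i x hx => ha i _ (r.2 i x hx)⟩,
    le_antisymm hL.radicalIdeal_le_jacobson (hL.jacobson_le_radicalIdeal hϖF)⟩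

end
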